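/- arXiv:2211.10913 — 4 statements merged into one kernel-verified Lean document; each statement's English description precedes it below -/
import Mathlib

section
/- For any real numbers ρ⁻ < ρ⁺, the count φ(n; ρ⁻, ρ⁺) of integers m with nρ⁻ < m < nρ⁺ coprime to n is asymptotically equivalent to (ρ⁺ − ρ⁻)·φ(n) as n → ∞, i.e., the ratio φ(n; ρ⁻, ρ⁺)/((ρ⁺ − ρ⁻)φ(n)) tends to 1. -/
/-!
Möbius inversion over the divisors of `n` writes the number of integers coprime to `n` in an
interval of length `ℓ` as `∑_{d ∣ n} μ(d) (ℓ / d + O(1)) = ℓ φ(n) / n + O(2^{ω(n)})`. For the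
interval `(nρ⁻, nρ⁺)` the main term is `(ρ⁺ - ρ⁻) φ(n)`, and the error is negligible since
`(2^{ω(n)} / φ(n))² ≤ 16¹⁶ / n`: indeed `n ≤ 2^{ω(n)} φ(n)` because `p ≤ 2 (p - 1)`, and
`16^{ω(n)} ≤ 16¹⁶ n` because at most sixteen prime factors of `n` lie below `16`.
-/

open Filter

/-- φ(n; ρ⁻, ρ⁺): the number of integers `m` with `nρ⁻ < m < nρ⁺` coprime to `n`. -/
noncomputable def phiInterval (n : ℕ) (ρm ρp : ℝ) : ℕ :=
  {m : ℤ | (n : ℝ) * ρm < (m : ℝ) ∧ (m : ℝ) < (n : ℝ) * ρp ∧ Int.gcd m n = 1}.ncard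

open Finset ArithmeticFunction
open scoped ArithmeticFunction.Moebius Nat Topology

section Moebius

variable {R : Type*}

theorem sum_divisors_moebius_eq_ite [Ring R] (k : ℕ) :
    ∑ d ∈ k.divisors, (μ d : R) = if k = 1 then 1 else 0 := by
  have h := congrArg (· k) (coe_moebius_mul_coe_zeta (R := R))
  rwa [coe_mul_zeta_apply, one_apply] at h

theorem Int.divisors_gcd_natCast {n : ℕ} (hn : n ≠ 0) (m : ℤ) :
    (Int.gcd m n).divisors = ({d ∈ n.divisors | (d : ℤ) ∣ m} : Finset ℕ) := by
  ext d
  simp [Int.gcd_eq_natAbs, Nat.dvd_gcd_iff, Int.natCast_dvd, hn, and_comm]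

theorem natCast_card_filter_coprime_eq_sum_moebius [Ring R] (s : Finset ℤ) {n : ℕ}
    (hn : n ≠ 0) :
    (#{m ∈ s | Int.gcd m n = 1} : R) = ∑ d ∈ n.divisors, (μ d : R) * #{m ∈ s | (d : ℤ) ∣ m} := by
  calc (#{m ∈ s | Int.gcd m n = 1} : R)
      = ∑ m ∈ s, ∑ d ∈ n.divisors, if (d : ℤ) ∣ m then (μ d : R) else 0 := by
        simp only [natCast_card_filter, ← sum_filter, ← Int.divisors_gcd_natCast hn,
          sum_divisors_moebius_eq_ite]
    _ = _ := by
        rw [sum_comm]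
        refine sum_congr rfl fun d _ => ?_
        rw [← sum_filter, sum_const, nsmul_eq_mul, Int.cast_comm]

theorem sum_divisors_moebius_div_eq_totient_div [Field R] [CharZero R] (n : ℕ) :
    ∑ d ∈ n.divisors, (μ d : R) / d = φ n / n := by
  rcases n.eq_zero_or_pos with rfl | hn
  · simp
  have h := (sum_eq_iff_sum_mul_moebius_eq (R := R) (f := fun k => (φ k : R))
      (g := fun k => (k : R))).mp (fun m _ => mod_cast Nat.sum_totient m) n hn
  rw [Nat.sum_divisorsAntidiagonal (fun d e => (μ d : R) * e)] at h
  rw [← h, sum_div]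
  refine sum_congr rfl fun d hd => ?_
  have hn0 : (n : R) ≠ 0 := by exact_mod_cast hn.ne'
  have hd0 : (d : R) ≠ 0 := by exact_mod_cast (Nat.pos_of_mem_divisors hd).ne'
  rw [Nat.cast_div (Nat.dvd_of_mem_divisors hd) hd0]
  field_simp

theorem card_divisors_filter_squarefree {n : ℕ} (hn : n ≠ 0) :
    #{d ∈ n.divisors | Squarefree d} = 2 ^ #n.primeFactors := by
  rw [card_eq_sum_ones, Nat.sum_divisors_filter_squarefree hn]
  simp [Nat.factors_eq]

theorem sum_divisors_abs_moebius [Ring R] [LinearOrder R] [IsStrictOrderedRing R] {n : ℕ}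
    (hn : n ≠ 0) :
    ∑ d ∈ n.divisors, |(μ d : R)| = 2 ^ #n.primeFactors := by
  simp_rw [← Int.cast_abs, abs_moebius]
  push_cast
  rw [sum_boole, card_divisors_filter_squarefree hn]
  push_cast
  rfl

end Moebius

theorem mem_Ioo_floor_ceil {K : Type*} [Ring K] [LinearOrder K] [FloorRing K] {a b : K} {m : ℤ} :
    m ∈ Ioo ⌊a⌋ ⌈b⌉ ↔ a < m ∧ m < b := by
  rw [mem_Ioo, Int.floor_lt, Int.lt_ceil]

section Interval

variable {K : Type*} [Field K] [LinearOrder K] [IsStrictOrderedRing K] [FloorRing K]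

theorem abs_card_Ioo_floor_ceil_sub_le {a b : K} (hab : a ≤ b) :
    |(#(Ioo ⌊a⌋ ⌈b⌉) : K) - (b - a)| ≤ 1 := by
  have := Int.floor_le a
  have := Int.lt_floor_add_one a
  have := Int.le_ceil b
  have := Int.ceil_lt_add_one b
  rw [Int.card_Ioo, abs_le]
  rcases le_total (⌈b⌉ - ⌊a⌋ - 1) 0 with h | h
  · have h' : (⌈b⌉ : K) - ⌊a⌋ - 1 ≤ 0 := by exact_mod_cast h
    rw [Int.toNat_of_nonpos h]
    constructor <;> push_cast <;> linarith
  · have h' : ((⌈b⌉ - ⌊a⌋ - 1).toNat : K) = ⌈b⌉ - ⌊a⌋ - 1 := by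
      rw [← Int.cast_natCast, Int.toNat_of_nonneg h]
      push_cast
      ring
    rw [h']
    constructor <;> linarith

theorem card_filter_dvd_Ioo_floor_ceil {d : ℕ} (hd : 0 < d) (a b : K) :
    #{m ∈ Ioo ⌊a⌋ ⌈b⌉ | (d : ℤ) ∣ m} = #(Ioo ⌊a / d⌋ ⌈b / d⌉) := by
  have hd' : (0 : K) < d := by exact_mod_cast hd
  have hdz : (d : ℤ) ≠ 0 := by exact_mod_cast hd.ne'
  suffices {m ∈ Ioo ⌊a⌋ ⌈b⌉ | (d : ℤ) ∣ m} = (Ioo ⌊a / d⌋ ⌈b / d⌉).image ((d : ℤ) * ·) by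
    rw [this, card_image_of_injective _ (mul_right_injective₀ hdz)]
  ext m
  simp only [mem_filter, mem_image, mem_Ioo_floor_ceil, div_lt_iff₀ hd', lt_div_iff₀ hd']
  constructor
  · rintro ⟨⟨ha, hb⟩, k, rfl⟩
    push_cast at ha hb
    exact ⟨k, ⟨by linarith, by linarith⟩, rfl⟩
  · rintro ⟨k, ⟨ha, hb⟩, rfl⟩
    push_cast
    exact ⟨⟨by linarith, by linarith⟩, dvd_mul_right _ _⟩

theorem abs_card_filter_dvd_Ioo_floor_ceil_sub_le {d : ℕ} (hd : 0 < d) {a b : K} (hab : a ≤ b) :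
    |(#{m ∈ Ioo ⌊a⌋ ⌈b⌉ | (d : ℤ) ∣ m} : K) - (b - a) / d| ≤ 1 := by
  rw [card_filter_dvd_Ioo_floor_ceil hd, sub_div]
  exact abs_card_Ioo_floor_ceil_sub_le (by gcongr)

theorem abs_card_filter_coprime_Ioo_floor_ceil_sub_le {n : ℕ} (hn : n ≠ 0) {a b : K}
    (hab : a ≤ b) :
    |(#{m ∈ Ioo ⌊a⌋ ⌈b⌉ | Int.gcd m n = 1} : K) - (b - a) * φ n / n| ≤ 2 ^ #n.primeFactors := by
  have hmain : (b - a) * φ n / n = ∑ d ∈ n.divisors, μ d * ((b - a) / d) := by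
    rw [mul_div_assoc, ← sum_divisors_moebius_div_eq_totient_div, mul_sum]
    exact sum_congr rfl fun d _ => by ring
  rw [natCast_card_filter_coprime_eq_sum_moebius _ hn, hmain, ← sum_sub_distrib,
    ← sum_divisors_abs_moebius hn]
  refine (abs_sum_le_sum_abs _ _).trans (sum_le_sum fun d hd => ?_)
  rw [← mul_sub, abs_mul]
  exact mul_le_of_le_one_right (abs_nonneg _)
    (abs_card_filter_dvd_Ioo_floor_ceil_sub_le (Nat.pos_of_mem_divisors hd) hab)

end Interval

theorem le_two_pow_card_primeFactors_mul_totient (n : ℕ) : n ≤ 2 ^ #n.primeFactors * φ n := by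
  have hprod : (n : ℚ) * (2⁻¹) ^ #n.primeFactors ≤ φ n := by
    rw [Nat.totient_eq_mul_prod_factors, ← prod_const]
    gcongr with p hp
    have hp2 : (2 : ℚ) ≤ p := by exact_mod_cast (Nat.prime_of_mem_primeFactors hp).two_le
    linarith [inv_anti₀ two_pos hp2]
  have : (n : ℚ) ≤ 2 ^ #n.primeFactors * φ n := by
    calc (n : ℚ) = 2 ^ #n.primeFactors * (n * 2⁻¹ ^ #n.primeFactors) := by
          rw [mul_left_comm, ← mul_pow, mul_inv_cancel₀ two_ne_zero, one_pow, mul_one]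
      _ ≤ 2 ^ #n.primeFactors * φ n := by gcongr
  exact_mod_cast this

theorem pow_card_primeFactors_le (k : ℕ) {n : ℕ} (hn : n ≠ 0) :
    k ^ #n.primeFactors ≤ k ^ k * n := by
  rcases k.eq_zero_or_pos with rfl | hk
  · simpa using (zero_pow_le_one _).trans (Nat.one_le_iff_ne_zero.mpr hn)
  set S := n.primeFactors
  have hsmall : #{p ∈ S | p < k} ≤ k :=
    (card_le_card fun p hp => mem_range.mpr (mem_filter.mp hp).2).trans (card_range k).le
  have hlarge : k ^ #{p ∈ S | ¬p < k} ≤ n := by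
    calc k ^ #{p ∈ S | ¬p < k} = ∏ _p ∈ {p ∈ S | ¬p < k}, k := (prod_const k).symm
      _ ≤ ∏ p ∈ {p ∈ S | ¬p < k}, p := prod_le_prod' fun p hp => not_lt.mp (mem_filter.mp hp).2
      _ ≤ ∏ p ∈ S, p := prod_le_prod_of_subset_of_one_le' (filter_subset _ _) fun p hp _ =>
          Nat.pos_of_mem_primeFactors hp
      _ ≤ n := Nat.le_of_dvd (Nat.pos_of_ne_zero hn) (Nat.prod_primeFactors_dvd n)
  calc k ^ #S = k ^ #{p ∈ S | p < k} * k ^ #{p ∈ S | ¬p < k} := by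
        rw [← pow_add, card_filter_add_card_filter_not]
    _ ≤ k ^ k * n := Nat.mul_le_mul (Nat.pow_le_pow_right hk hsmall) hlarge

theorem four_pow_card_primeFactors_mul_le (n : ℕ) :
    4 ^ #n.primeFactors * n ≤ 16 ^ 16 * φ n ^ 2 := by
  rcases n.eq_zero_or_pos with rfl | hn
  · simp
  refine Nat.le_of_mul_le_mul_right ?_ hn
  calc 4 ^ #n.primeFactors * n * n = 4 ^ #n.primeFactors * n ^ 2 := by ring
    _ ≤ 4 ^ #n.primeFactors * (2 ^ #n.primeFactors * φ n) ^ 2 := by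
        gcongr; exact le_two_pow_card_primeFactors_mul_totient n
    _ = 16 ^ #n.primeFactors * φ n ^ 2 := by
        rw [mul_pow, pow_right_comm, ← mul_assoc, ← mul_pow]
        norm_num
    _ ≤ 16 ^ 16 * n * φ n ^ 2 := by gcongr; exact pow_card_primeFactors_le 16 hn.ne'
    _ = 16 ^ 16 * φ n ^ 2 * n := by ring

theorem tendsto_two_pow_card_primeFactors_div_totient :
    Tendsto (fun n : ℕ => (2 ^ #n.primeFactors : ℝ) / φ n) atTop (𝓝 0) := by
  have hsqrt : Tendsto (fun n : ℕ => √(16 ^ 16 / n)) atTop (𝓝 0) := by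
    simpa only [Function.comp_def, Real.sqrt_zero] using
      (Real.continuous_sqrt.tendsto 0).comp (tendsto_const_div_atTop_nhds_zero_nat (16 ^ 16))
  refine squeeze_zero' (Eventually.of_forall fun n => by positivity) ?_ hsqrt
  filter_upwards [eventually_ne_atTop 0] with n hn
  have hn' : (0 : ℝ) < n := by exact_mod_cast Nat.pos_of_ne_zero hn
  rw [Real.le_sqrt (by positivity) (by positivity), div_pow, ← pow_mul, pow_mul',
    div_le_div_iff₀ (by positivity) hn']
  exact_mod_cast four_pow_card_primeFactors_mul_le n

theorem phiInterval_eq_card (n : ℕ) (ρm ρp : ℝ) :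
    phiInterval n ρm ρp = #{m ∈ Ioo ⌊n * ρm⌋ ⌈n * ρp⌉ | Int.gcd m n = 1} := by
  rw [phiInterval, ← Set.ncard_coe_finset]
  congr 1
  ext m
  simp only [Set.mem_ofPred_eq, coe_filter, mem_Ioo_floor_ceil, and_assoc]

theorem abs_phiInterval_sub_le {n : ℕ} (hn : n ≠ 0) {ρm ρp : ℝ} (h : ρm ≤ ρp) :
    |(phiInterval n ρm ρp : ℝ) - (ρp - ρm) * φ n| ≤ 2 ^ #n.primeFactors := by
  have hn' : (n : ℝ) ≠ 0 := by exact_mod_cast hn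
  have := abs_card_filter_coprime_Ioo_floor_ceil_sub_le hn
    (mul_le_mul_of_nonneg_left h n.cast_nonneg)
  rwa [show (n * ρp - n * ρm) * φ n / n = (ρp - ρm) * φ n by field_simp,
    ← phiInterval_eq_card] at this

theorem phiInterval_asymptotic (ρm ρp : ℝ) (h : ρm < ρp) :
    Tendsto (fun n : ℕ => (phiInterval n ρm ρp : ℝ) / ((ρp - ρm) * (Nat.totient n : ℝ)))
      atTop (nhds 1) := by
  have hL : 0 < ρp - ρm := sub_pos.mpr h
  have hbound : ∀ᶠ n : ℕ in atTop,
      ‖(phiInterval n ρm ρp : ℝ) / ((ρp - ρm) * φ n) - 1‖ ≤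
        2 ^ #n.primeFactors / φ n / (ρp - ρm) := by
    filter_upwards [eventually_ne_atTop 0] with n hn
    have hφ : (0 : ℝ) < φ n := by exact_mod_cast Nat.totient_pos.mpr (Nat.pos_of_ne_zero hn)
    have hLφ : 0 < (ρp - ρm) * φ n := mul_pos hL hφ
    rw [Real.norm_eq_abs, div_sub_one hLφ.ne', abs_div, abs_of_pos hLφ, div_div,
      mul_comm (φ n : ℝ)]
    exact div_le_div_of_nonneg_right (abs_phiInterval_sub_le hn h.le) hLφ.le
  have hlim := tendsto_two_pow_card_primeFactors_div_totient.div_const (ρp - ρm)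
  rw [zero_div] at hlim
  simpa using (squeeze_zero_norm' hbound hlim).add_const 1
end

section
/- For any real numbers ρ⁻ < ρ⁺, the number Φ(n; ρ⁻, ρ⁺) of irreducible fractions p/q with ρ⁻ < p/q < ρ⁺ and 1 ≤ q ≤ n is asymptotically equivalent to (3(ρ⁺ − ρ⁻)/π²)·n² as n → ∞. -/
open Filter Real

/-- Φ(n; ρ⁻, ρ⁺): the number of irreducible fractions `p/q` with `ρ⁻ < p/q < ρ⁺`
and denominator `q ≤ n`. -/
noncomputable def PhiInterval (n : ℕ) (ρm ρp : ℝ) : ℕ :=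
  {q : ℚ | ρm < (q : ℝ) ∧ (q : ℝ) < ρp ∧ q.den ≤ n}.ncard

/-!
Let `A(q)` count the fractions `p / q` (`p ∈ ℤ`) in `(ρ⁻, ρ⁺)` and `C(q)` the reduced ones with
denominator exactly `q`. Sorting the former by reduced denominator gives `A = C * ζ` as arithmetic
functions, so `C = μ * A` and `Φ(n) = ∑ C(q) = ∑_d μ(d) N(⌊n/d⌋)` with `N(m) = ∑_{q ≤ m} A(q)`.
Since `A(q) = q (ρ⁺ - ρ⁻) + O(1)`, `N(m) / m² → (ρ⁺ - ρ⁻) / 2`, and the bound `N(m) = O(m²)` lets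
Tannery's theorem pass to the limit termwise:
`Φ(n) / n² → (ρ⁺ - ρ⁻) / 2 · ∑ μ(d) / d² = (ρ⁺ - ρ⁻) / (2 ζ(2)) = 3 (ρ⁺ - ρ⁻) / π²`.
-/

open Topology Finset ArithmeticFunction
open scoped ArithmeticFunction.Moebius ArithmeticFunction.zeta

theorem Rat.den_dvd_iff_exists_eq_div {x : ℚ} {q : ℕ} (hq : q ≠ 0) :
    x.den ∣ q ↔ ∃ p : ℤ, x = p / q := by
  constructor
  · rintro ⟨k, rfl⟩
    refine ⟨x.num * k, ?_⟩
    have hk : (k : ℚ) ≠ 0 := by exact_mod_cast right_ne_zero_of_mul hq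
    push_cast
    rw [mul_div_mul_right _ _ hk, Rat.num_div_den]
  · rintro ⟨p, rfl⟩
    have := Rat.den_dvd p q
    rw [Rat.divInt_eq_div] at this
    exact_mod_cast this

theorem hasSum_moebius_div_sq : HasSum (fun d : ℕ => (μ d : ℝ) / d ^ 2) (6 / π ^ 2) := by
  have h2 : 1 < (2 : ℂ).re := by norm_num
  have hL : LSeries (fun n => (μ n : ℂ)) 2 = 6 / π ^ 2 := by
    have h := LSeries_one_mul_Lseries_moebius h2
    rw [LSeries_one_eq_riemannZeta h2, riemannZeta_two] at h
    have : (π : ℂ) ≠ 0 := by exact_mod_cast pi_ne_zero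
    field_simp
    linear_combination 6 * h
  have h := (LSeriesSummable_moebius_iff.mpr h2).LSeriesHasSum
  rw [hL, LSeriesHasSum] at h
  rw [← Complex.hasSum_ofReal]
  convert h using 1
  · ext d
    rcases eq_or_ne d 0 with rfl | hd
    · simp
    · rw [LSeries.term_of_ne_zero hd]
      push_cast
      norm_cast
  · push_cast
    rfl

noncomputable def intervalFractions (ρm ρp : ℝ) (q : ℕ) : Finset ℚ :=
  (Ioo ⌊q * ρm⌋ ⌈q * ρp⌉).image fun p : ℤ => (p / q : ℚ)

noncomputable def reducedIntervalFractions (ρm ρp : ℝ) (q : ℕ) : Finset ℚ :=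
  {x ∈ intervalFractions ρm ρp q | x.den = q}

noncomputable def fractionCount (ρm ρp : ℝ) : ArithmeticFunction ℝ :=
  ⟨fun q => #(intervalFractions ρm ρp q), by simp [intervalFractions]⟩

noncomputable def reducedFractionCount (ρm ρp : ℝ) : ArithmeticFunction ℝ :=
  ⟨fun q => #(reducedIntervalFractions ρm ρp q), by simp [reducedIntervalFractions]⟩

noncomputable def fractionCountSum (ρm ρp : ℝ) (m : ℕ) : ℝ :=
  ∑ q ∈ Ioc 0 m, fractionCount ρm ρp q

section Fractions

variable {ρm ρp : ℝ}

theorem mem_intervalFractions {q : ℕ} (hq : q ≠ 0) {x : ℚ} :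
    x ∈ intervalFractions ρm ρp q ↔ (ρm < x ∧ (x : ℝ) < ρp) ∧ x.den ∣ q := by
  have hq' : (0 : ℝ) < q := by positivity
  have hscale (p : ℤ) :
      (q * ρm < p ∧ p < q * ρp) ↔ (ρm < ((p / q : ℚ) : ℝ) ∧ ((p / q : ℚ) : ℝ) < ρp) := by
    push_cast
    rw [lt_div_iff₀ hq', div_lt_iff₀ hq', mul_comm ρm, mul_comm ρp]
  rw [Rat.den_dvd_iff_exists_eq_div hq]
  simp only [intervalFractions, mem_image, mem_Ioo, Int.floor_lt, Int.lt_ceil]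
  constructor
  · rintro ⟨p, hp, rfl⟩
    exact ⟨(hscale p).1 hp, p, rfl⟩
  · rintro ⟨hx, p, rfl⟩
    exact ⟨p, (hscale p).2 hx, rfl⟩

theorem mem_reducedIntervalFractions {q : ℕ} {x : ℚ} :
    x ∈ reducedIntervalFractions ρm ρp q ↔ (ρm < x ∧ (x : ℝ) < ρp) ∧ x.den = q := by
  rw [reducedIntervalFractions, mem_filter]
  constructor
  · rintro ⟨hx, rfl⟩
    exact ⟨((mem_intervalFractions x.den_ne_zero).1 hx).1, rfl⟩
  · rintro ⟨hx, rfl⟩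
    exact ⟨(mem_intervalFractions x.den_ne_zero).2 ⟨hx, dvd_rfl⟩, rfl⟩

theorem pairwiseDisjoint_reducedIntervalFractions (s : Set ℕ) :
    s.PairwiseDisjoint (reducedIntervalFractions ρm ρp) := by
  intro q _ q' _ hne
  refine disjoint_left.2 fun x hx hx' => hne ?_
  rw [← (mem_reducedIntervalFractions.1 hx).2, ← (mem_reducedIntervalFractions.1 hx').2]

theorem intervalFractions_eq_biUnion {q : ℕ} (hq : q ≠ 0) :
    intervalFractions ρm ρp q = q.divisors.biUnion (reducedIntervalFractions ρm ρp) := by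
  ext x
  simp [mem_intervalFractions hq, mem_reducedIntervalFractions, hq, and_comm]

theorem setOf_den_le_eq_biUnion (n : ℕ) :
    {x : ℚ | ρm < x ∧ (x : ℝ) < ρp ∧ x.den ≤ n} =
      ((Ioc 0 n).biUnion (reducedIntervalFractions ρm ρp) : Set ℚ) := by
  ext x
  simp [mem_reducedIntervalFractions, x.den_pos, and_assoc]

theorem card_intervalFractions (q : ℕ) :
    #(intervalFractions ρm ρp q) = #(Ioo ⌊q * ρm⌋ ⌈q * ρp⌉) := by
  rcases eq_or_ne q 0 with rfl | hq
  · simp [intervalFractions]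
  · refine card_image_of_injective _ fun p p' h => ?_
    simpa [hq] using h

@[simp]
theorem fractionCount_apply (q : ℕ) : fractionCount ρm ρp q = #(intervalFractions ρm ρp q) := rfl

@[simp]
theorem reducedFractionCount_apply (q : ℕ) :
    reducedFractionCount ρm ρp q = #(reducedIntervalFractions ρm ρp q) := rfl

theorem fractionCount_eq_mul_zeta : fractionCount ρm ρp = reducedFractionCount ρm ρp * ζ := by
  ext q
  rcases eq_or_ne q 0 with rfl | hq
  · simp only [ArithmeticFunction.map_zero]
  · rw [coe_mul_zeta_apply, fractionCount_apply, intervalFractions_eq_biUnion hq,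
      card_biUnion (pairwiseDisjoint_reducedIntervalFractions _)]
    push_cast
    rfl

theorem reducedFractionCount_eq_moebius_mul :
    reducedFractionCount ρm ρp = μ * fractionCount ρm ρp := by
  rw [fractionCount_eq_mul_zeta, mul_comm, mul_assoc, coe_zeta_mul_coe_moebius, mul_one]

theorem PhiInterval_eq_sum_reducedFractionCount (n : ℕ) :
    (PhiInterval n ρm ρp : ℝ) = ∑ q ∈ Ioc 0 n, reducedFractionCount ρm ρp q := by
  rw [PhiInterval, setOf_den_le_eq_biUnion, Set.ncard_coe_finset,
    card_biUnion (pairwiseDisjoint_reducedIntervalFractions _)]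
  push_cast
  rfl

theorem PhiInterval_eq_sum_moebius (n : ℕ) :
    (PhiInterval n ρm ρp : ℝ) = ∑ d ∈ Ioc 0 n, μ d * fractionCountSum ρm ρp (n / d) := by
  rw [PhiInterval_eq_sum_reducedFractionCount, reducedFractionCount_eq_moebius_mul,
    sum_Ioc_mul_eq_sum_sum]
  simp only [intCoe_apply, fractionCountSum]

theorem abs_fractionCount_sub_le (h : ρm ≤ ρp) (q : ℕ) :
    |fractionCount ρm ρp q - q * (ρp - ρm)| ≤ 1 := by
  have hcard : (fractionCount ρm ρp q : ℝ) = max ((⌈q * ρp⌉ - ⌊q * ρm⌋ - 1 : ℤ) : ℝ) 0 := by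
    rw [fractionCount_apply, card_intervalFractions, Int.card_Ioo, ← Int.cast_natCast,
      Int.toNat_eq_max, Int.cast_max, Int.cast_zero]
  have hfloor := Int.floor_le ((q : ℝ) * ρm)
  have hfloor' := Int.lt_floor_add_one ((q : ℝ) * ρm)
  have hceil := Int.le_ceil ((q : ℝ) * ρp)
  have hceil' := Int.ceil_lt_add_one ((q : ℝ) * ρp)
  have hqL : 0 ≤ (q : ℝ) * (ρp - ρm) := mul_nonneg q.cast_nonneg (sub_nonneg.2 h)
  rw [hcard, abs_le]
  push_cast
  constructor <;> cases max_cases ((⌈q * ρp⌉ : ℝ) - ⌊q * ρm⌋ - 1) 0 <;> linarith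

theorem abs_fractionCountSum_sub_le (h : ρm ≤ ρp) (m : ℕ) :
    |fractionCountSum ρm ρp m - (ρp - ρm) * (m * (m + 1) / 2)| ≤ m := by
  induction m with
  | zero => simp [fractionCountSum]
  | succ m ih =>
    have hstep := abs_fractionCount_sub_le h (m + 1)
    rw [fractionCountSum, sum_Ioc_succ_top m.zero_le, ← fractionCountSum]
    rw [abs_le] at *
    push_cast at *
    constructor <;> linarith

theorem fractionCountSum_nonneg (m : ℕ) : 0 ≤ fractionCountSum ρm ρp m :=
  sum_nonneg fun _ _ => Nat.cast_nonneg _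

theorem fractionCountSum_le (h : ρm ≤ ρp) (m : ℕ) :
    fractionCountSum ρm ρp m ≤ (ρp - ρm + 1) * m ^ 2 := by
  have hm : (m : ℝ) ≤ m ^ 2 := by exact_mod_cast Nat.le_self_pow two_ne_zero m
  have hL := mul_le_mul_of_nonneg_left hm (sub_nonneg.2 h)
  nlinarith [(abs_le.1 (abs_fractionCountSum_sub_le h m)).2]

theorem tendsto_fractionCountSum_div_sq (h : ρm ≤ ρp) :
    Tendsto (fun m : ℕ => fractionCountSum ρm ρp m / m ^ 2) atTop (𝓝 ((ρp - ρm) / 2)) := by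
  have hL : 0 ≤ ρp - ρm := sub_nonneg.2 h
  have hdist (m : ℕ) (hm : m ≠ 0) :
      |fractionCountSum ρm ρp m / m ^ 2 - (ρp - ρm) / 2| ≤ ((ρp - ρm) / 2 + 1) / m := by
    have hm' : (0 : ℝ) < m := by positivity
    have herr := abs_fractionCountSum_sub_le h m
    have hsplit : fractionCountSum ρm ρp m / m ^ 2 - (ρp - ρm) / 2 =
        (fractionCountSum ρm ρp m - (ρp - ρm) * (m * (m + 1) / 2) + (ρp - ρm) / 2 * m) / m ^ 2 := by
      field_simp
      ring
    rw [hsplit, abs_div, abs_of_pos (pow_pos hm' 2), div_le_div_iff₀ (pow_pos hm' 2) hm']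
    calc _ ≤ (m + (ρp - ρm) / 2 * m) * m := by
          refine mul_le_mul_of_nonneg_right ((abs_add_le _ _).trans ?_) hm'.le
          rw [abs_of_nonneg (mul_nonneg (by linarith) hm'.le)]
          linarith
      _ = _ := by ring
  rw [tendsto_iff_norm_sub_tendsto_zero]
  refine squeeze_zero' (Eventually.of_forall fun _ => norm_nonneg _) ?_
    (tendsto_const_div_atTop_nhds_zero_nat ((ρp - ρm) / 2 + 1))
  filter_upwards [eventually_ne_atTop 0] with m hm using hdist m hm

theorem tendsto_fractionCountSum_floor_div_sq (h : ρm ≤ ρp) :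
    Tendsto (fun x : ℝ => fractionCountSum ρm ρp ⌊x⌋₊ / x ^ 2) atTop (𝓝 ((ρp - ρm) / 2)) := by
  have hlim := ((tendsto_fractionCountSum_div_sq h).comp tendsto_nat_floor_atTop).mul
    ((tendsto_nat_floor_div_atTop (R := ℝ)).pow 2)
  rw [one_pow, mul_one] at hlim
  refine hlim.congr' ?_
  filter_upwards [eventually_ge_atTop 1] with x hx
  have : (⌊x⌋₊ : ℝ) ≠ 0 := by exact_mod_cast (Nat.floor_pos.2 hx).ne'
  simp only [Function.comp_apply]
  field_simp

theorem tendsto_fractionCountSum_div_div_sq (h : ρm ≤ ρp) (d : ℕ) :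
    Tendsto (fun n : ℕ => fractionCountSum ρm ρp (n / d) / n ^ 2) atTop
      (𝓝 ((ρp - ρm) / 2 / d ^ 2)) := by
  rcases eq_or_ne d 0 with rfl | hd
  · -- `n / 0 = 0` and `x / 0 = 0`: both sides are `0`
    simp [fractionCountSum]
  have hd' : (0 : ℝ) < d := by positivity
  have hlim := (tendsto_fractionCountSum_floor_div_sq h).comp
    (tendsto_natCast_atTop_atTop.atTop_div_const hd')
  refine (hlim.div_const (d ^ 2)).congr fun n => ?_
  simp only [Function.comp_apply, Nat.floor_div_eq_div]
  field_simp

theorem abs_moebius_mul_fractionCountSum_div_sq_le (h : ρm ≤ ρp) (n d : ℕ) :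
    |μ d * fractionCountSum ρm ρp (n / d) / n ^ 2| ≤ (ρp - ρm + 1) / d ^ 2 := by
  have hL : 0 ≤ ρp - ρm := sub_nonneg.2 h
  rcases eq_or_ne n 0 with rfl | hn
  · rw [Nat.cast_zero, zero_pow two_ne_zero, div_zero, abs_zero]
    exact div_nonneg (by linarith) (sq_nonneg _)
  rw [abs_div, abs_mul, abs_of_nonneg (fractionCountSum_nonneg _),
    abs_of_nonneg (sq_nonneg (n : ℝ))]
  have hμ : |(μ d : ℝ)| ≤ 1 := by exact_mod_cast abs_moebius_le_one
  have hN : fractionCountSum ρm ρp (n / d) ≤ (ρp - ρm + 1) * ((n : ℝ) / d) ^ 2 :=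
    (fractionCountSum_le h _).trans (by gcongr; exact Nat.cast_div_le)
  calc _ ≤ 1 * ((ρp - ρm + 1) * ((n : ℝ) / d) ^ 2) / n ^ 2 :=
        div_le_div_of_nonneg_right (mul_le_mul hμ hN (fractionCountSum_nonneg _) zero_le_one)
          (sq_nonneg _)
    _ = (ρp - ρm + 1) / d ^ 2 := by field_simp

theorem tendsto_PhiInterval_div_sq (h : ρm ≤ ρp) :
    Tendsto (fun n : ℕ => (PhiInterval n ρm ρp : ℝ) / n ^ 2) atTop
      (𝓝 (3 * (ρp - ρm) / π ^ 2)) := by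
  have hsum :
      HasSum (fun d : ℕ => (μ d : ℝ) * ((ρp - ρm) / 2 / d ^ 2)) (3 * (ρp - ρm) / π ^ 2) := by
    have hterm : (fun d : ℕ => (μ d : ℝ) * ((ρp - ρm) / 2 / d ^ 2)) =
        fun d => (ρp - ρm) / 2 * ((μ d : ℝ) / d ^ 2) := by
      funext d
      ring
    rw [hterm, show 3 * (ρp - ρm) / π ^ 2 = (ρp - ρm) / 2 * (6 / π ^ 2) by ring]
    exact hasSum_moebius_div_sq.mul_left _
  have hPhi (n : ℕ) : (PhiInterval n ρm ρp : ℝ) / n ^ 2 =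
      ∑' d, μ d * fractionCountSum ρm ρp (n / d) / n ^ 2 := by
    rw [PhiInterval_eq_sum_moebius, sum_div, tsum_eq_sum fun d hd => ?_]
    rcases eq_or_ne d 0 with rfl | hd0
    · simp
    · rw [Nat.div_eq_of_lt (by simp only [mem_Ioc, not_and, not_le] at hd; omega)]
      simp [fractionCountSum]
  simp_rw [hPhi, ← hsum.tsum_eq, mul_div_assoc]
  refine tendsto_tsum_of_dominated_convergence (bound := fun d : ℕ => (ρp - ρm + 1) / d ^ 2)
    ?_ (fun d => (tendsto_fractionCountSum_div_div_sq h d).const_mul _)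
    (Eventually.of_forall fun n d => ?_)
  · simpa [div_eq_mul_inv] using (Real.summable_nat_pow_inv.2 one_lt_two).mul_left (ρp - ρm + 1)
  · rw [← mul_div_assoc]
    exact abs_moebius_mul_fractionCountSum_div_sq_le h n d

end Fractions

theorem PhiInterval_asymptotic (ρm ρp : ℝ) (h : ρm < ρp) :
    Tendsto (fun n : ℕ => (PhiInterval n ρm ρp : ℝ) / (3 * (ρp - ρm) / π ^ 2 * (n : ℝ) ^ 2))
      atTop (nhds 1) := by
  have hc : 3 * (ρp - ρm) / π ^ 2 ≠ 0 := by
    have := sub_pos.2 h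
    positivity
  have hlim := (tendsto_PhiInterval_div_sq h.le).div_const (3 * (ρp - ρm) / π ^ 2)
  rw [div_self hc] at hlim
  refine hlim.congr fun n => ?_
  rw [div_div, mul_comm]
end

section
/- The totient summatory sum over integers coprime to a prime n₀ satisfies: ∑_{q ≤ n} φ(q) − ∑_{k ≤ ⌊n/n₀⌋} n₀·φ(k) ≤ ∑_{q ≤ n, gcd(q,n₀)=1} φ(q) ≤ ∑_{q ≤ n} φ(q) − ∑_{k ≤ ⌊n/n₀⌋} (n₀ − 1)·φ(k). -/
/-! The integers in `[1, n]` not coprime to the prime `p` are exactly the multiples `p * k` with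
`k ∈ [1, n / p]`, and each `φ (p * k)` lies between `(p - 1) * φ k` and `p * φ k`. -/

open Finset

namespace Nat

theorem Icc_filter_dvd_eq_map {p : ℕ} (hp : 0 < p) (n : ℕ) :
    {q ∈ Icc 1 n | p ∣ q} = (Icc 1 (n / p)).map ⟨(p * ·), mul_right_injective₀ hp.ne'⟩ := by
  ext q
  simp only [mem_map, mem_filter, mem_Icc, Function.Embedding.coeFn_mk]
  constructor
  · rintro ⟨⟨hq1, hqn⟩, k, rfl⟩
    exact ⟨k, ⟨one_le_iff_ne_zero.2 (right_ne_zero_of_mul (one_le_iff_ne_zero.1 hq1)),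
      (Nat.le_div_iff_mul_le hp).2 ((mul_comm k p).trans_le hqn)⟩, rfl⟩
  · rintro ⟨k, ⟨hk1, hkn⟩, rfl⟩
    exact ⟨⟨one_le_iff_ne_zero.2 (mul_ne_zero hp.ne' (one_le_iff_ne_zero.1 hk1)),
      (mul_comm p k).trans_le ((Nat.le_div_iff_mul_le hp).1 hkn)⟩, dvd_mul_right p k⟩

theorem sum_Icc_filter_dvd {M : Type*} [AddCommMonoid M] {p : ℕ} (hp : 0 < p) (n : ℕ)
    (f : ℕ → M) : ∑ q ∈ Icc 1 n with p ∣ q, f q = ∑ k ∈ Icc 1 (n / p), f (p * k) := by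
  rw [Icc_filter_dvd_eq_map hp, sum_map]
  rfl

theorem totient_prime_mul_le {p : ℕ} (hp : p.Prime) (k : ℕ) : φ (p * k) ≤ p * φ k := by
  by_cases hdvd : p ∣ k
  · exact (totient_mul_of_prime_of_dvd hp hdvd).le
  · rw [totient_mul_of_prime_of_not_dvd hp hdvd]
    exact Nat.mul_le_mul_right _ (sub_le p 1)

theorem sub_one_mul_totient_le_totient_prime_mul {p : ℕ} (hp : p.Prime) (k : ℕ) :
    (p - 1) * φ k ≤ φ (p * k) :=
  totient_prime hp ▸ totient_super_multiplicative p k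

end Nat

theorem totient_sum_coprime_bounds (n₀ : ℕ) (hn₀ : n₀.Prime) (n : ℕ) :
    ((∑ q ∈ Icc 1 n, Nat.totient q : ℤ) - ∑ k ∈ Icc 1 (n / n₀), (n₀ : ℤ) * Nat.totient k
      ≤ ∑ q ∈ (Icc 1 n).filter (fun q => Nat.Coprime q n₀), (Nat.totient q : ℤ)) ∧
    ((∑ q ∈ (Icc 1 n).filter (fun q => Nat.Coprime q n₀), (Nat.totient q : ℤ))
      ≤ (∑ q ∈ Icc 1 n, Nat.totient q : ℤ)
        - ∑ k ∈ Icc 1 (n / n₀), ((n₀ : ℤ) - 1) * Nat.totient k) := by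
  have hsplit := sum_filter_add_sum_filter_not (Icc 1 n) (fun q => q.Coprime n₀)
    (fun q => (Nat.totient q : ℤ))
  have hmultiples : ∑ q ∈ Icc 1 n with ¬ q.Coprime n₀, (Nat.totient q : ℤ)
      = ∑ k ∈ Icc 1 (n / n₀), (Nat.totient (n₀ * k) : ℤ) := by
    rw [← Nat.sum_Icc_filter_dvd hn₀.pos n fun q => (Nat.totient q : ℤ)]
    refine sum_congr (filter_congr fun q _ => ?_) fun _ _ => rfl
    rw [Nat.coprime_comm, hn₀.coprime_iff_not_dvd, not_not]
  have hupper : ∑ k ∈ Icc 1 (n / n₀), (Nat.totient (n₀ * k) : ℤ)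
      ≤ ∑ k ∈ Icc 1 (n / n₀), (n₀ : ℤ) * Nat.totient k :=
    sum_le_sum fun k _ => mod_cast Nat.totient_prime_mul_le hn₀ k
  have hlower : ∑ k ∈ Icc 1 (n / n₀), ((n₀ : ℤ) - 1) * Nat.totient k
      ≤ ∑ k ∈ Icc 1 (n / n₀), (Nat.totient (n₀ * k) : ℤ) := by
    refine sum_le_sum fun k _ => ?_
    rw [← Nat.cast_pred hn₀.pos]
    exact_mod_cast Nat.sub_one_mul_totient_le_totient_prime_mul hn₀ k
  constructor <;> linarith
end

section
/- The summatory totient function Φ(n) = φ(1) + ⋯ + φ(n) satisfies Φ(n) = (3/π²)n² + O(n log n) as n → ∞. -/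
/-!
Möbius inversion of `∑_{d ∣ k} φ d = k` gives `φ = μ ⋆ id`, so exchanging the order of summation
`2 Φ(n) = ∑_{d ≤ n} μ(d) ⌊n/d⌋ (⌊n/d⌋ + 1)`. Replacing `⌊x⌋ (⌊x⌋ + 1)` by `x²` costs at most `x`
per term, hence `O(n log n)` in total by the harmonic bound; and `∑_{d ≤ n} μ(d)/d²` differs from
`1/ζ(2) = 6/π²` by at most `∑_{d > n} 1/d² ≤ 1/n`, which costs `O(n)` after multiplying by `n²`.
-/

open Finset Real Asymptotics Filter
open scoped ArithmeticFunction.Moebius LSeries.notation Topology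

theorem sum_Icc_totient_eq_sum_moebius_mul (n : ℕ) :
    ∑ k ∈ Icc 1 n, (k.totient : ℝ) = ∑ d ∈ Icc 1 n, (μ d : ℝ) * ∑ m ∈ Icc 1 (n / d), (m : ℝ) := by
  have hφ : ∀ k ∈ Icc 1 n, (k.totient : ℝ) =
      (μ * (ArithmeticFunction.id : ArithmeticFunction ℕ) : ArithmeticFunction ℝ) k := by
    intro k hk
    refine (ArithmeticFunction.sum_eq_iff_sum_mul_moebius_eq (f := fun k ↦ (k.totient : ℝ))
      (g := (↑)) |>.mp (fun m _ ↦ ?_) k (mem_Icc.mp hk).1).symm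
    exact_mod_cast Nat.sum_totient m
  rw [sum_congr rfl hφ]
  exact ArithmeticFunction.sum_Ioc_mul_eq_sum_sum _ _ n

theorem sum_Icc_id_mul_two (N : ℕ) : (∑ m ∈ Icc 1 N, (m : ℝ)) * 2 = N * (N + 1) := by
  induction N with
  | zero => simp
  | succ N ih => rw [sum_Icc_succ_top (by omega), add_mul, ih]; push_cast; ring

theorem abs_floor_mul_floor_add_one_sub_sq_le {K : Type*} [Field K] [LinearOrder K]
    [IsStrictOrderedRing K] [FloorSemiring K] {x : K} (hx : 0 ≤ x) :
    |(⌊x⌋₊ : K) * (⌊x⌋₊ + 1) - x ^ 2| ≤ x := by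
  have h₁ : (⌊x⌋₊ : K) ≤ x := Nat.floor_le hx
  have h₂ : x < ⌊x⌋₊ + 1 := Nat.lt_floor_add_one x
  rw [abs_le]
  constructor <;> nlinarith [Nat.cast_nonneg (α := K) ⌊x⌋₊]

theorem abs_tsum_sub_sum_Icc_le_inv {f : ℕ → ℝ} (hf : ∀ d, |f d| ≤ ((d : ℝ) ^ 2)⁻¹) {n : ℕ}
    (hn : n ≠ 0) : |∑' d, f d - ∑ d ∈ Icc 1 n, f d| ≤ (n : ℝ)⁻¹ := by
  have hf₀ : f 0 = 0 := by simpa using hf 0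
  have hsum : Summable f := .of_norm_bounded (summable_nat_pow_inv.mpr one_lt_two) hf
  have hlim : Tendsto (fun m ↦ ∑ d ∈ Ioc n m, f d) atTop
      (𝓝 (∑' d, f d - ∑ d ∈ Icc 1 n, f d)) := by
    refine ((hsum.hasSum.tendsto_sum_nat.comp (tendsto_add_atTop_nat 1)).sub_const _).congr'
      (eventually_atTop.mpr ⟨n, fun m hm ↦ ?_⟩)
    rw [Function.comp_apply, Nat.range_succ_eq_Icc_zero, ← sum_Ioc_add_eq_sum_Icc (Nat.zero_le m),
      hf₀, add_zero, ← sum_Ioc_consecutive _ (Nat.zero_le n) hm]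
    exact add_sub_cancel_left _ _
  refine le_of_tendsto hlim.abs (eventually_atTop.mpr ⟨n, fun m hm ↦ ?_⟩)
  calc |∑ d ∈ Ioc n m, f d| ≤ ∑ d ∈ Ioc n m, ((d : ℝ) ^ 2)⁻¹ :=
        (abs_sum_le_sum_abs _ _).trans (sum_le_sum fun d _ ↦ hf d)
    _ ≤ (n : ℝ)⁻¹ - (m : ℝ)⁻¹ := sum_Ioc_inv_sq_le_sub hn hm
    _ ≤ (n : ℝ)⁻¹ := sub_le_self _ (by positivity)

theorem tsum_moebius_div_sq : ∑' d : ℕ, (μ d : ℝ) / (d : ℝ) ^ 2 = 6 / π ^ 2 := by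
  have hL : L ↗μ 2 = 6 / (π : ℂ) ^ 2 := by
    have h := ArithmeticFunction.LSeries_zeta_mul_Lseries_moebius (s := 2) (by norm_num)
    rw [ArithmeticFunction.LSeries_zeta_eq_riemannZeta (by norm_num), riemannZeta_two] at h
    have hπ : (π : ℂ) ≠ 0 := Complex.ofReal_ne_zero.mpr pi_ne_zero
    field_simp at h ⊢
    linear_combination h
  have hterm : ∀ d : ℕ, LSeries.term ↗μ 2 d = ((μ d / (d : ℝ) ^ 2 : ℝ) : ℂ) := by
    intro d
    rcases eq_or_ne d 0 with rfl | hd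
    · simp
    · rw [LSeries.term_of_ne_zero hd, ← Nat.cast_ofNat, Complex.cpow_natCast]
      push_cast; rfl
  apply Complex.ofReal_injective
  rw [Complex.ofReal_tsum, ← tsum_congr hterm]
  push_cast
  exact hL

theorem abs_six_div_pi_sq_sub_sum_moebius_div_sq_le {n : ℕ} (hn : n ≠ 0) :
    |6 / π ^ 2 - ∑ d ∈ Icc 1 n, (μ d : ℝ) / (d : ℝ) ^ 2| ≤ (n : ℝ)⁻¹ := by
  rw [← tsum_moebius_div_sq]
  refine abs_tsum_sub_sum_Icc_le_inv (fun d ↦ ?_) hn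
  have hμ : |(μ d : ℝ)| ≤ 1 := by exact_mod_cast ArithmeticFunction.abs_moebius_le_one
  rw [abs_div, abs_of_nonneg (by positivity : (0 : ℝ) ≤ (d : ℝ) ^ 2), ← one_div]
  exact div_le_div_of_nonneg_right hμ (by positivity)

theorem sum_Icc_inv_le_one_add_log (n : ℕ) : ∑ d ∈ Icc 1 n, (d : ℝ)⁻¹ ≤ 1 + log n := by
  simpa [harmonic_eq_sum_Icc] using harmonic_le_one_add_log n

theorem abs_two_mul_sum_totient_sub_le (n : ℕ) :
    |2 * ∑ k ∈ Icc 1 n, (k.totient : ℝ) - n ^ 2 * ∑ d ∈ Icc 1 n, (μ d : ℝ) / (d : ℝ) ^ 2|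
      ≤ n * (1 + log n) := by
  have hfloor : ∀ d, ((n / d : ℕ) : ℝ) = ⌊(n : ℝ) / d⌋₊ := fun d ↦ by rw [Nat.floor_div_eq_div]
  have hsplit : 2 * ∑ k ∈ Icc 1 n, (k.totient : ℝ) - n ^ 2 * ∑ d ∈ Icc 1 n, (μ d : ℝ) / (d : ℝ) ^ 2
      = ∑ d ∈ Icc 1 n, (μ d : ℝ) *
          (⌊(n : ℝ) / d⌋₊ * (⌊(n : ℝ) / d⌋₊ + 1) - ((n : ℝ) / d) ^ 2) := by
    rw [sum_Icc_totient_eq_sum_moebius_mul, mul_sum, mul_sum, ← sum_sub_distrib]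
    refine sum_congr rfl fun d _ ↦ ?_
    rw [← hfloor, ← sum_Icc_id_mul_two]
    ring
  rw [hsplit]
  calc
    _ ≤ ∑ d ∈ Icc 1 n, (n : ℝ) * (d : ℝ)⁻¹ := by
      refine (abs_sum_le_sum_abs _ _).trans (sum_le_sum fun d _ ↦ ?_)
      rw [abs_mul, ← div_eq_mul_inv]
      have hμ : |(μ d : ℝ)| ≤ 1 := by exact_mod_cast ArithmeticFunction.abs_moebius_le_one
      exact (mul_le_of_le_one_left (abs_nonneg _) hμ).trans
        (abs_floor_mul_floor_add_one_sub_sq_le (by positivity))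
    _ ≤ n * (1 + log n) := by
      rw [← mul_sum]
      exact mul_le_mul_of_nonneg_left (sum_Icc_inv_le_one_add_log n) (Nat.cast_nonneg n)

theorem abs_sum_totient_sub_le {n : ℕ} (hn : n ≠ 0) :
    |∑ k ∈ Icc 1 n, (k.totient : ℝ) - 3 / π ^ 2 * n ^ 2| ≤ n * (2 + log n) / 2 := by
  set S := ∑ d ∈ Icc 1 n, (μ d : ℝ) / (d : ℝ) ^ 2
  have hmain := abs_two_mul_sum_totient_sub_le n
  have htail : |(n : ℝ) ^ 2 * (S - 6 / π ^ 2)| ≤ (n : ℝ) := by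
    rw [abs_mul, abs_sub_comm, abs_of_nonneg (by positivity)]
    calc (n : ℝ) ^ 2 * |6 / π ^ 2 - S|
        ≤ (n : ℝ) ^ 2 * (n : ℝ)⁻¹ := by gcongr; exact abs_six_div_pi_sq_sub_sum_moebius_div_sq_le hn
      _ = (n : ℝ) := by field_simp
  calc |∑ k ∈ Icc 1 n, (k.totient : ℝ) - 3 / π ^ 2 * n ^ 2|
      = |(2 * ∑ k ∈ Icc 1 n, (k.totient : ℝ) - n ^ 2 * S) + n ^ 2 * (S - 6 / π ^ 2)| / 2 := by
        rw [← abs_two, ← abs_div]; ring_nf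
    _ ≤ (n * (1 + log n) + n) / 2 :=
        div_le_div_of_nonneg_right ((abs_add_le _ _).trans (add_le_add hmain htail)) zero_le_two
    _ = n * (2 + log n) / 2 := by ring

theorem totient_summatory_asymptotic :
    (fun n : ℕ => (∑ k ∈ Icc 1 n, (Nat.totient k : ℝ)) - 3 / π ^ 2 * (n : ℝ) ^ 2)
      =O[atTop] (fun n : ℕ => (n : ℝ) * Real.log n) := by
  refine IsBigO.of_bound (3 / 2) (eventually_atTop.mpr ⟨3, fun n hn ↦ ?_⟩)
  have hn₃ : (3 : ℝ) ≤ n := by exact_mod_cast hn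
  have hlog : 1 ≤ log n := by
    rw [le_log_iff_exp_le (by positivity)]
    linarith [exp_one_lt_d9]
  rw [norm_eq_abs, norm_of_nonneg (by positivity)]
  calc _ ≤ n * (2 + log n) / 2 := abs_sum_totient_sub_le (by omega)
    _ ≤ 3 / 2 * (n * log n) := by nlinarith
end
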